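/- arXiv:2011.07447 — 2 statements merged into one kernel-verified Lean document; each statement's English description precedes it below -/
import Mathlib

section
/- Let n, f, h, b be natural numbers with n > 2f, b ≤ f, and 1 ≤ h ≤ n, and let L, μ, σ be reals with 0 < μ ≤ L and σ ≥ 0. If nμ − (3 + k_n σ) f L > 0, then the quantity R = (nμ − (3 + k_n σ) f L) / ((n − 2f)(1 + σ)L + (1 + k_n σ) f L) is strictly positive (so there exists a real r with 0 < r < R); moreover, for every real r with 0 < r < R, the quantity β = (n − 2f)·(μ − r(1 + σ)L)/(1 + r) − b(1 + k_h σ)L is strictly positive. -/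
/-- `k_x = 1 + (x - 1)/√(2x - 1)` for `x ≥ 1`. -/
noncomputable def kfun (x : ℝ) : ℝ := 1 + (x - 1) / Real.sqrt (2 * x - 1)

lemma one_le_kfun {x : ℝ} (hx : 1 ≤ x) : 1 ≤ kfun x := by
  unfold kfun
  have : 0 ≤ (x - 1) / Real.sqrt (2 * x - 1) :=
    div_nonneg (by linarith) (Real.sqrt_nonneg _)
  linarith

lemma kfun_mono {a c : ℝ} (ha : 1 ≤ a) (hac : a ≤ c) : kfun a ≤ kfun c := by
  unfold kfun
  have h1 : (0:ℝ) < 2 * a - 1 := by linarith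
  have h2 : (0:ℝ) < 2 * c - 1 := by linarith
  have hs : 0 < Real.sqrt (2 * a - 1) := Real.sqrt_pos.mpr h1
  have ht : 0 < Real.sqrt (2 * c - 1) := Real.sqrt_pos.mpr h2
  have hs2 : Real.sqrt (2 * a - 1) ^ 2 = 2 * a - 1 := Real.sq_sqrt h1.le
  have ht2 : Real.sqrt (2 * c - 1) ^ 2 = 2 * c - 1 := Real.sq_sqrt h2.le
  have key : (a - 1) * Real.sqrt (2 * c - 1) ≤ (c - 1) * Real.sqrt (2 * a - 1) := by
    nlinarith [mul_pos hs ht, sq_nonneg ((a - 1) * Real.sqrt (2 * c - 1) -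
      (c - 1) * Real.sqrt (2 * a - 1)), mul_nonneg (mul_nonneg (by linarith : (0:ℝ) ≤ a - 1) hs.le) ht.le,
      mul_nonneg (mul_nonneg (by linarith : (0:ℝ) ≤ c - 1) hs.le) ht.le]
  have : (a - 1) / Real.sqrt (2 * a - 1) ≤ (c - 1) / Real.sqrt (2 * c - 1) :=
    (div_le_div_iff₀ hs ht).mpr key
  linarith

/-- Lemma 3 (existence of a valid deviation ratio): if `nμ - (3 + k_n σ) f L > 0` then the
bound `R` is positive, and every `r` with `0 < r < R` makes the contraction constant
`β = (n - 2f)(μ - r(1+σ)L)/(1+r) - b(1 + k_h σ)L` strictly positive. -/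
theorem beta_pos_of_r_lt
    (n f h b : ℕ) (hn2f : 2 * f < n) (hbf : b ≤ f) (hh1 : 1 ≤ h) (hhn : h ≤ n)
    (L μ σ : ℝ) (hμ : 0 < μ) (hμL : μ ≤ L) (hσ : 0 ≤ σ)
    (R : ℝ)
    (hR : R = ((n : ℝ) * μ - (3 + kfun n * σ) * f * L) /
      (((n : ℝ) - 2 * f) * (1 + σ) * L + (1 + kfun n * σ) * f * L))
    (hnum : 0 < (n : ℝ) * μ - (3 + kfun n * σ) * f * L) :
    0 < R ∧ ∀ r : ℝ, 0 < r → r < R →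
      0 < ((n : ℝ) - 2 * f) * (μ - r * (1 + σ) * L) / (1 + r)
            - (b : ℝ) * (1 + kfun h * σ) * L := by
  have hL : 0 < L := lt_of_lt_of_le hμ hμL
  have hn2f' : (0:ℝ) < (n:ℝ) - 2 * f := by
    have : (2 * f : ℝ) < n := by exact_mod_cast hn2f
    linarith
  have hf0 : (0:ℝ) ≤ f := Nat.cast_nonneg f
  have hb0 : (0:ℝ) ≤ b := Nat.cast_nonneg b
  have hbf' : (b:ℝ) ≤ f := by exact_mod_cast hbf
  have hh1' : (1:ℝ) ≤ h := by exact_mod_cast hh1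
  have hhn' : (h:ℝ) ≤ n := by exact_mod_cast hhn
  have hkh : 1 ≤ kfun h := one_le_kfun hh1'
  have hkn : 1 ≤ kfun n := one_le_kfun (le_trans hh1' hhn')
  have hkhn : kfun h ≤ kfun n := kfun_mono hh1' hhn'
  have hD : 0 < ((n : ℝ) - 2 * f) * (1 + σ) * L + (1 + kfun n * σ) * f * L := by
    have h1 : 0 < ((n : ℝ) - 2 * f) * (1 + σ) * L := by positivity
    have h2 : 0 ≤ (1 + kfun n * σ) * f * L := by
      have : 0 ≤ kfun n * σ := mul_nonneg (by linarith) hσ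
      have : 0 ≤ (1 + kfun n * σ) := by linarith
      positivity
    linarith
  have hRpos : 0 < R := hR ▸ div_pos hnum hD
  refine ⟨hRpos, fun r hr hrR => ?_⟩
  have h1r : (0:ℝ) < 1 + r := by linarith
  rw [sub_pos, lt_div_iff₀ h1r]
  have hrd : r * (((n : ℝ) - 2 * f) * (1 + σ) * L + (1 + kfun n * σ) * f * L)
      < (n : ℝ) * μ - (3 + kfun n * σ) * f * L := by
    rw [hR] at hrR
    exact (lt_div_iff₀ hD).mp hrR
  have hbk : (b:ℝ) * (1 + kfun h * σ) ≤ (f:ℝ) * (1 + kfun n * σ) := by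
    have h1 : (0:ℝ) ≤ 1 + kfun h * σ := by nlinarith
    have h2 : kfun h * σ ≤ kfun n * σ := mul_le_mul_of_nonneg_right hkhn hσ
    nlinarith
  have hbkL : (b:ℝ) * (1 + kfun h * σ) * (L * (1 + r)) ≤
      (f:ℝ) * (1 + kfun n * σ) * (L * (1 + r)) :=
    mul_le_mul_of_nonneg_right hbk (by positivity)
  nlinarith [mul_nonneg hf0 (sub_nonneg.mpr hμL)]
end

section
/- Let (Ω, 𝓕, P) be a probability space, let h ≥ 1 be a natural number, and let g_1, …, g_h : Ω → ℝ^d be independent, identically distributed, square-integrable random vectors with common mean E[g_j] = v ∈ ℝ^d and E‖g_j − v‖² ≤ σ²‖v‖² for a real σ ≥ 0. Let M(ω) = max_{1 ≤ j ≤ h} ‖g_j(ω)‖. Then E[M] ≤ (1 + k_h σ)‖v‖, where k_h = 1 + (h − 1)/√(2h − 1). -/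
/-!
Put `Y_j = ‖g_j - v‖`, so that `max_j ‖g_j‖ ≤ ‖v‖ + max_j Y_j`, and let `Q` be the quantile function
of the common law of the `Y_j`. Since `Q(u) ≤ t ↔ u ≤ F(t)`, `Q` pushes the uniform law on `(0,1)`
to the law of `Y_j`, and the law `n u^(n-1) du` of the maximum of `n` independent uniforms to the law
of `max_j Y_j`. Hence `E[max_j Y_j] = ∫₀¹ n u^(n-1) Q(u) du`, and Cauchy–Schwarz bounds this by
`(∫₀¹ n² u^(2n-2) du)^(1/2) (∫₀¹ Q²)^(1/2) = n/√(2n-1) · E[Y_1²]^(1/2) ≤ k_n σ ‖v‖`.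
-/

open MeasureTheory ProbabilityTheory
open scoped ProbabilityTheory

open Set

theorem MeasureTheory.integral_mul_le_sqrt_mul_sqrt {α : Type*} [MeasurableSpace α]
    {μ : Measure α} {f g : α → ℝ} (hf : MemLp f 2 μ) (hg : MemLp g 2 μ) :
    ∫ a, f a * g a ∂μ ≤ √(∫ a, f a ^ 2 ∂μ) * √(∫ a, g a ^ 2 ∂μ) := by
  have holder := integral_mul_le_Lp_mul_Lq_of_nonneg Real.HolderConjugate.two_two
    (ae_of_all μ fun a => norm_nonneg (f a)) (ae_of_all μ fun a => norm_nonneg (g a))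
    (by simpa using hf.norm) (by simpa using hg.norm)
  simp only [Real.rpow_two, Real.norm_eq_abs, sq_abs, ← Real.sqrt_eq_rpow] at holder
  calc ∫ a, f a * g a ∂μ ≤ ‖∫ a, f a * g a ∂μ‖ := le_abs_self _
    _ ≤ ∫ a, ‖f a * g a‖ ∂μ := norm_integral_le_integral_norm _
    _ ≤ _ := by simpa only [norm_mul, Real.norm_eq_abs] using holder

lemma integral_Ioc_natCast_mul_pow_sub_one {n : ℕ} (hn : n ≠ 0) {x : ℝ} (hx : 0 ≤ x) :
    ∫ u in Ioc 0 x, n * u ^ (n - 1) = x ^ n := by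
  rw [← intervalIntegral.integral_of_le hx, intervalIntegral.integral_const_mul, integral_pow,
    Nat.sub_add_cancel (Nat.one_le_iff_ne_zero.2 hn), Nat.cast_sub (Nat.one_le_iff_ne_zero.2 hn)]
  field_simp
  simp [hn]

lemma integral_Ioo_sq_natCast_mul_pow_sub_one {n : ℕ} (hn : n ≠ 0) :
    ∫ u in Ioo (0 : ℝ) 1, ((n : ℝ) * u ^ (n - 1)) ^ 2 = (n : ℝ) ^ 2 / (2 * n - 1) := by
  have h : (((n - 1) * 2 : ℕ) : ℝ) + 1 = 2 * n - 1 := by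
    rw [Nat.cast_mul, Nat.cast_sub (Nat.one_le_iff_ne_zero.2 hn)]
    ring
  simp_rw [mul_pow, ← pow_mul]
  rw [← integral_Ioc_eq_integral_Ioo, ← intervalIntegral.integral_of_le zero_le_one,
    intervalIntegral.integral_const_mul, integral_pow, h]
  simp [div_eq_mul_inv]

/-- The law of the maximum of `n` independent uniform random variables on `(0, 1)`. -/
noncomputable def uniformMaxLaw (n : ℕ) : Measure ℝ :=
  (volume.restrict (Ioo 0 1)).withDensity fun u => ENNReal.ofReal (n * u ^ (n - 1))

namespace uniformMaxLaw

variable {n : ℕ}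

lemma congr_of_inter_eq {s t : Set ℝ} (h : Ioo 0 1 ∩ s = Ioo 0 1 ∩ t) :
    uniformMaxLaw n s = uniformMaxLaw n t := by
  simp only [uniformMaxLaw, withDensity_apply', Measure.restrict_restrict' measurableSet_Ioo,
    inter_comm s, inter_comm t, h]

lemma apply_Iic (hn : n ≠ 0) {x : ℝ} (hx : x ∈ Icc 0 1) :
    uniformMaxLaw n (Iic x) = ENNReal.ofReal (x ^ n) := by
  have hset : Ioo 0 1 ∩ Iic x = Ioc 0 x \ {1} := by
    ext u
    simp only [mem_inter_iff, mem_Ioo, mem_Iic, Set.mem_sdiff, mem_Ioc, mem_singleton_iff]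
    constructor
    · rintro ⟨⟨h0, h1⟩, hux⟩
      exact ⟨⟨h0, hux⟩, h1.ne⟩
    · rintro ⟨⟨h0, hux⟩, h1⟩
      exact ⟨⟨h0, lt_of_le_of_ne (hux.trans hx.2) h1⟩, hux⟩
  rw [uniformMaxLaw, withDensity_apply', Measure.restrict_restrict' measurableSet_Ioo,
    inter_comm, hset, setLIntegral_congr (sdiff_null_ae_eq_self (measure_singleton 1)),
    ← integral_Ioc_natCast_mul_pow_sub_one hn hx.1, ofReal_integral_eq_lintegral_ofReal]
  · exact (by fun_prop : Continuous fun u : ℝ => n * u ^ (n - 1)).integrableOn_Ioc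
  · filter_upwards [ae_restrict_mem measurableSet_Ioc] with u hu
    exact mul_nonneg n.cast_nonneg (pow_nonneg hu.1.le _)

lemma one : uniformMaxLaw 1 = volume.restrict (Ioo 0 1) := by
  simp [uniformMaxLaw, ← Pi.one_def, withDensity_one]

lemma integral_eq (n : ℕ) (f : ℝ → ℝ) :
    ∫ u, f u ∂uniformMaxLaw n = ∫ u in Ioo 0 1, n * u ^ (n - 1) * f u := by
  rw [uniformMaxLaw, integral_withDensity_eq_integral_toReal_smul (by fun_prop)
    (ae_of_all _ fun _ => ENNReal.ofReal_lt_top)]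
  refine setIntegral_congr_fun measurableSet_Ioo fun u hu => ?_
  rw [ENNReal.toReal_ofReal (mul_nonneg n.cast_nonneg (pow_nonneg hu.1.le _)), smul_eq_mul]

end uniformMaxLaw

namespace ProbabilityTheory

/-- Only the values on `(0, 1)` matter: elsewhere the set is empty or unbounded below. -/
noncomputable def quantile (μ : Measure ℝ) (u : ℝ) : ℝ := sInf {t | u ≤ cdf μ t}

variable {μ : Measure ℝ}

lemma quantile_le_iff {u : ℝ} (hu : u ∈ Ioo 0 1) (t : ℝ) :
    quantile μ u ≤ t ↔ u ≤ cdf μ t := by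
  set S := {t | u ≤ cdf μ t}
  have hne : S.Nonempty := ((tendsto_cdf_atTop μ).eventually (lt_mem_nhds hu.2)).exists.imp
    fun _ h => h.le
  have hbdd : BddBelow S := by
    obtain ⟨t₀, ht₀⟩ := ((tendsto_cdf_atBot μ).eventually (gt_mem_nhds hu.1)).exists_forall_of_atBot
    exact ⟨t₀, fun t ht => not_lt.1 fun hlt => (ht₀ t hlt.le).not_ge ht⟩
  -- right continuity of `cdf μ` at `sInf S`
  have hmem : sInf S ∈ S := by
    refine ge_of_tendsto (((cdf μ).right_continuous _).mono Ioi_subset_Ici_self) ?_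
    filter_upwards [self_mem_nhdsWithin] with t ht
    obtain ⟨s, hs, hst⟩ := exists_lt_of_csInf_lt hne ht
    exact hs.trans (monotone_cdf μ hst.le)
  exact ⟨fun h => hmem.trans (monotone_cdf μ h), fun h => csInf_le hbdd h⟩

lemma monotoneOn_quantile : MonotoneOn (quantile μ) (Ioo 0 1) := fun _ hu _ hu' huu' =>
  (quantile_le_iff hu _).2 (huu'.trans ((quantile_le_iff hu' _).1 le_rfl))

lemma Ioo_inter_preimage_quantile_Iic (t : ℝ) :
    Ioo 0 1 ∩ quantile μ ⁻¹' Iic t = Ioo 0 1 ∩ Iic (cdf μ t) := by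
  ext u
  simp only [mem_inter_iff, mem_preimage, mem_Iic]
  exact and_congr_right (quantile_le_iff · t)

lemma aemeasurable_quantile : AEMeasurable (quantile μ) (volume.restrict (Ioo 0 1)) :=
  aemeasurable_restrict_of_monotoneOn measurableSet_Ioo monotoneOn_quantile

lemma aemeasurable_quantile_uniformMaxLaw (n : ℕ) :
    AEMeasurable (quantile μ) (uniformMaxLaw n) :=
  aemeasurable_quantile.mono_ac (withDensity_absolutelyContinuous _ _)

lemma map_quantile_uniformMaxLaw_Iic [IsProbabilityMeasure μ] {n : ℕ} (hn : n ≠ 0) (t : ℝ) :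
    (uniformMaxLaw n).map (quantile μ) (Iic t) = ENNReal.ofReal (cdf μ t ^ n) := by
  rw [Measure.map_apply_of_aemeasurable (aemeasurable_quantile_uniformMaxLaw n) measurableSet_Iic,
    uniformMaxLaw.congr_of_inter_eq (Ioo_inter_preimage_quantile_Iic t),
    ← uniformMaxLaw.congr_of_inter_eq (s := Iic (cdf μ t)) rfl,
    uniformMaxLaw.apply_Iic hn ⟨cdf_nonneg μ t, cdf_le_one μ t⟩]

theorem map_quantile_volume_Ioo [IsProbabilityMeasure μ] :
    (volume.restrict (Ioo 0 1)).map (quantile μ) = μ := by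
  refine (Measure.ext_of_Iic μ _ fun t => ?_).symm
  rw [← uniformMaxLaw.one, map_quantile_uniformMaxLaw_Iic one_ne_zero, pow_one, ofReal_cdf]

lemma integral_comp_quantile [IsProbabilityMeasure μ] {f : ℝ → ℝ}
    (hf : AEStronglyMeasurable f μ) :
    ∫ u in Ioo 0 1, f (quantile μ u) = ∫ x, f x ∂μ := by
  rw [← integral_map aemeasurable_quantile (by rwa [map_quantile_volume_Ioo]),
    map_quantile_volume_Ioo]

lemma memLp_quantile [IsProbabilityMeasure μ] {p : ENNReal} (h : MemLp id p μ) :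
    MemLp (quantile μ) p (volume.restrict (Ioo 0 1)) := by
  rw [← map_quantile_volume_Ioo (μ := μ)] at h
  exact (memLp_map_measure_iff aestronglyMeasurable_id aemeasurable_quantile).1 h

section iid

variable {Ω ι : Type*} [MeasurableSpace Ω] {P : Measure Ω} [IsProbabilityMeasure P] [Fintype ι]
  {Y : ι → Ω → ℝ} {i₀ : ι}

theorem map_iSup_eq_map_quantile (hind : iIndepFun Y P)
    (hid : ∀ i, IdentDistrib (Y i) (Y i₀) P P) :
    P.map (fun ω => ⨆ i, Y i ω) =
      (uniformMaxLaw (Fintype.card ι)).map (quantile (P.map (Y i₀))) := by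
  have hY₀ : AEMeasurable (Y i₀) P := (hid i₀).aemeasurable_fst
  have hmax : AEMeasurable (fun ω => ⨆ i, Y i ω) P :=
    AEMeasurable.iSup fun i => (hid i).aemeasurable_fst
  have := Measure.isProbabilityMeasure_map hY₀
  have := Measure.isProbabilityMeasure_map hmax
  have : Nonempty ι := ⟨i₀⟩
  refine Measure.ext_of_Iic _ _ fun t => ?_
  have hpre : (fun ω => ⨆ i, Y i ω) ⁻¹' Iic t = ⋂ i, Y i ⁻¹' Iic t := by
    ext ω
    simpa using ciSup_le_iff (Finite.bddAbove_range fun i => Y i ω)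
  have hcdf : ∀ i, P (Y i ⁻¹' Iic t) = ENNReal.ofReal (cdf (P.map (Y i₀)) t) := fun i => by
    rw [(hid i).measure_mem_eq measurableSet_Iic, ofReal_cdf,
      Measure.map_apply_of_aemeasurable hY₀ measurableSet_Iic]
  rw [map_quantile_uniformMaxLaw_Iic Fintype.card_ne_zero,
    Measure.map_apply_of_aemeasurable hmax measurableSet_Iic, hpre,
    hind.meas_iInter fun i => ⟨Iic t, measurableSet_Iic, rfl⟩,
    Finset.prod_congr rfl fun i _ => hcdf i, Finset.prod_const, Finset.card_univ,
    ENNReal.ofReal_pow (cdf_nonneg _ t)]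

theorem integral_iSup_le_of_iIndepFun (hind : iIndepFun Y P)
    (hid : ∀ i, IdentDistrib (Y i) (Y i₀) P P) (hL2 : MemLp (Y i₀) 2 P) :
    ∫ ω, ⨆ i, Y i ω ∂P ≤
      Fintype.card ι / √(2 * Fintype.card ι - 1) * √(∫ ω, Y i₀ ω ^ 2 ∂P) := by
  set n := Fintype.card ι
  set μ := P.map (Y i₀)
  have : Nonempty ι := ⟨i₀⟩
  have hY₀ : AEMeasurable (Y i₀) P := hL2.aestronglyMeasurable.aemeasurable
  have := Measure.isProbabilityMeasure_map hY₀
  have hmax_eq : ∫ ω, ⨆ i, Y i ω ∂P = ∫ u in Ioo 0 1, n * u ^ (n - 1) * quantile μ u :=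
    calc ∫ ω, ⨆ i, Y i ω ∂P = ∫ y, y ∂(P.map fun ω => ⨆ i, Y i ω) :=
          (integral_map (AEMeasurable.iSup fun i => (hid i).aemeasurable_fst)
            aestronglyMeasurable_id).symm
      _ = ∫ y, y ∂((uniformMaxLaw n).map (quantile μ)) := by
          rw [map_iSup_eq_map_quantile hind hid]
      _ = ∫ u, quantile μ u ∂uniformMaxLaw n :=
          integral_map (aemeasurable_quantile_uniformMaxLaw n) aestronglyMeasurable_id
      _ = _ := uniformMaxLaw.integral_eq n _
  have hsq_eq : ∫ ω, Y i₀ ω ^ 2 ∂P = ∫ u in Ioo 0 1, quantile μ u ^ 2 := by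
    rw [integral_comp_quantile (f := (· ^ 2)) (continuous_pow 2).aestronglyMeasurable,
      integral_map hY₀ (continuous_pow 2).aestronglyMeasurable]
  have hQL2 : MemLp (quantile μ) 2 (volume.restrict (Ioo 0 1)) :=
    memLp_quantile ((memLp_map_measure_iff aestronglyMeasurable_id hY₀).2 hL2)
  have hwL2 : MemLp (fun u : ℝ => n * u ^ (n - 1)) 2 (volume.restrict (Ioo 0 1)) := by
    refine MemLp.of_bound (by fun_prop) n ?_
    filter_upwards [ae_restrict_mem measurableSet_Ioo] with u hu
    rw [Real.norm_of_nonneg (mul_nonneg n.cast_nonneg (pow_nonneg hu.1.le _))]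
    exact mul_le_of_le_one_right n.cast_nonneg (pow_le_one₀ hu.1.le hu.2.le)
  calc ∫ ω, ⨆ i, Y i ω ∂P
      ≤ √(∫ u in Ioo 0 1, ((n : ℝ) * u ^ (n - 1)) ^ 2) * √(∫ u in Ioo 0 1, quantile μ u ^ 2) :=
        hmax_eq ▸ integral_mul_le_sqrt_mul_sqrt hwL2 hQL2
    _ = n / √(2 * n - 1) * √(∫ ω, Y i₀ ω ^ 2 ∂P) := by
        have hn : 1 ≤ (n : ℝ) := Nat.one_le_cast.2 Fintype.card_pos
        rw [integral_Ioo_sq_natCast_mul_pow_sub_one Fintype.card_ne_zero,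
          Real.sqrt_div' _ (by linarith), Real.sqrt_sq n.cast_nonneg, hsq_eq]

end iid

end ProbabilityTheory

lemma MeasureTheory.Integrable.iSup_of_nonneg {Ω ι : Type*} [MeasurableSpace Ω] {P : Measure Ω}
    [Fintype ι] {f : ι → Ω → ℝ} (hf : ∀ i, Integrable (f i) P) (hf₀ : ∀ i ω, 0 ≤ f i ω) :
    Integrable (fun ω => ⨆ i, f i ω) P := by
  refine (integrable_finsetSum Finset.univ fun i _ => hf i).mono'
    (AEMeasurable.iSup fun i => (hf i).aemeasurable).aestronglyMeasurable (ae_of_all _ fun ω => ?_)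
  rw [Real.norm_of_nonneg (Real.iSup_nonneg fun i => hf₀ i ω)]
  exact Real.iSup_le (fun i => Finset.single_le_sum (fun j _ => hf₀ j ω) (Finset.mem_univ i))
    (Finset.sum_nonneg fun j _ => hf₀ j ω)

lemma integral_iSup_norm_le_add_integral_iSup_norm_sub {Ω ι E : Type*} [MeasurableSpace Ω]
    {P : Measure Ω} [IsProbabilityMeasure P] [Fintype ι] [NormedAddCommGroup E]
    {g : ι → Ω → E} (hg : ∀ i, Integrable (g i) P) (v : E) :
    ∫ ω, ⨆ i, ‖g i ω‖ ∂P ≤ ‖v‖ + ∫ ω, ⨆ i, ‖g i ω - v‖ ∂P := by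
  have hmax : Integrable (fun ω => ⨆ i, ‖g i ω - v‖) P :=
    Integrable.iSup_of_nonneg (fun i => ((hg i).sub (integrable_const v)).norm)
      fun _ _ => norm_nonneg _
  have hpointwise : ∀ ω, ⨆ i, ‖g i ω‖ ≤ ‖v‖ + ⨆ i, ‖g i ω - v‖ := fun ω =>
    Real.iSup_le (fun i => (norm_le_norm_add_norm_sub' (g i ω) v).trans
      (by gcongr; exact le_ciSup (Finite.bddAbove_range fun i => ‖g i ω - v‖) i))
      (add_nonneg (norm_nonneg v) (Real.iSup_nonneg fun _ => norm_nonneg _))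
  calc ∫ ω, ⨆ i, ‖g i ω‖ ∂P ≤ ∫ ω, ‖v‖ + ⨆ i, ‖g i ω - v‖ ∂P :=
        integral_mono_of_nonneg (ae_of_all _ fun ω => Real.iSup_nonneg fun _ => norm_nonneg _)
          ((integrable_const _).add hmax) (ae_of_all _ hpointwise)
    _ = ‖v‖ + ∫ ω, ⨆ i, ‖g i ω - v‖ ∂P := by
        rw [integral_add (integrable_const _) hmax, integral_const, probReal_univ, one_smul]

lemma div_sqrt_le_kfun {x : ℝ} (hx : 1 ≤ x) : x / √(2 * x - 1) ≤ kfun x := by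
  have hsqrt : 1 ≤ √(2 * x - 1) := Real.one_le_sqrt.2 (by linarith)
  calc x / √(2 * x - 1) = 1 / √(2 * x - 1) + (x - 1) / √(2 * x - 1) := by ring
    _ ≤ kfun x := by
        rw [kfun]
        gcongr
        exact (div_le_one (by positivity)).2 hsqrt

theorem expectation_max_norm_le_general
    {Ω : Type*} [MeasureSpace Ω] [IsProbabilityMeasure (ℙ : Measure Ω)]
    (d h : ℕ) (hh : 1 ≤ h)
    (g : Fin h → Ω → EuclideanSpace ℝ (Fin d))
    (hindep : iIndepFun g ℙ)
    (hident : ∀ i j, IdentDistrib (g i) (g j) ℙ ℙ)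
    (hL2 : ∀ j, MemLp (g j) 2 ℙ)
    (v : EuclideanSpace ℝ (Fin d))
    (σ : ℝ) (hσ : 0 ≤ σ) (hvar : ∀ j, ∫ ω, ‖g j ω - v‖ ^ 2 ∂ℙ ≤ σ ^ 2 * ‖v‖ ^ 2) :
    ∫ ω, (⨆ j : Fin h, ‖g j ω‖) ∂ℙ ≤ (1 + kfun h * σ) * ‖v‖ := by
  let j₀ : Fin h := ⟨0, hh⟩
  have hdist : Measurable fun x : EuclideanSpace ℝ (Fin d) => ‖x - v‖ := by fun_prop
  have hmaxY : ∫ ω, ⨆ j, ‖g j ω - v‖ ∂ℙ ≤ h / √(2 * h - 1) * (σ * ‖v‖) :=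
    calc ∫ ω, ⨆ j, ‖g j ω - v‖ ∂ℙ ≤ h / √(2 * h - 1) * √(∫ ω, ‖g j₀ ω - v‖ ^ 2 ∂ℙ) := by
          simpa using integral_iSup_le_of_iIndepFun (Y := fun j ω => ‖g j ω - v‖)
            (hindep.comp _ fun _ => hdist) (fun j => (hident j j₀).comp hdist)
            ((hL2 j₀).sub (memLp_const v)).norm
      _ ≤ h / √(2 * h - 1) * √(σ ^ 2 * ‖v‖ ^ 2) := by gcongr; exact hvar j₀
      _ = h / √(2 * h - 1) * (σ * ‖v‖) := by rw [← mul_pow, Real.sqrt_sq (by positivity)]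
  have hk := mul_le_mul_of_nonneg_right (div_sqrt_le_kfun (Nat.one_le_cast.2 hh))
    (by positivity : 0 ≤ σ * ‖v‖)
  calc ∫ ω, ⨆ j, ‖g j ω‖ ∂ℙ ≤ ‖v‖ + ∫ ω, ⨆ j, ‖g j ω - v‖ ∂ℙ :=
        integral_iSup_norm_le_add_integral_iSup_norm_sub (fun j => (hL2 j).integrable one_le_two) v
    _ ≤ (1 + kfun h * σ) * ‖v‖ := by linarith

/-- Lemma (order statistics bound): for `h ≥ 1` i.i.d. square-integrable random vectors
`g_1, …, g_h` in `ℝ^d` with mean `v` and `E‖g_j − v‖² ≤ σ²‖v‖²`, the maximum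
`M = max_j ‖g_j‖` satisfies `E[M] ≤ (1 + k_h σ)‖v‖`. -/
theorem expectation_max_norm_le
    {Ω : Type*} [MeasureSpace Ω] [IsProbabilityMeasure (ℙ : Measure Ω)]
    (d h : ℕ) (hh : 1 ≤ h)
    (g : Fin h → Ω → EuclideanSpace ℝ (Fin d))
    (hindep : iIndepFun g ℙ)
    (hident : ∀ i j, IdentDistrib (g i) (g j) ℙ ℙ)
    (hL2 : ∀ j, MemLp (g j) 2 ℙ)
    (v : EuclideanSpace ℝ (Fin d)) (hmean : ∀ j, ∫ ω, g j ω ∂ℙ = v)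
    (σ : ℝ) (hσ : 0 ≤ σ) (hvar : ∀ j, ∫ ω, ‖g j ω - v‖ ^ 2 ∂ℙ ≤ σ ^ 2 * ‖v‖ ^ 2) :
    ∫ ω, (⨆ j : Fin h, ‖g j ω‖) ∂ℙ ≤ (1 + kfun h * σ) * ‖v‖ :=
  expectation_max_norm_le_general d h hh g hindep hident hL2 v σ hσ hvar
end
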